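/- For every pair of hypotheses h_A : Σ_A → Δ_Σ, h_B : Σ_B → Δ_Σ and every reward function R : Δ_Σ × Δ_Σ → ℝ such that f*(R(h_A(x_A), h_B(x_B))) is finite for all (x_A,x_B), the expected f-mutual information gain Σ_{x_A,x_B} Pr[X_A=x_A, X_B=x_B]·R(h_A(x_A), h_B(x_B)) − Σ_{x_A,x_B} Pr[X_A=x_A]·Pr[X_B=x_B]·f*(R(h_A(x_A), h_B(x_B))) is at most MI^f(X_A;X_B), and it equals MI^f(X_A;X_B) if and only if for every (x_A,x_B) the number R(h_A(x_A), h_B(x_B)) is a subgradient of f at K(x_A,x_B). -/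

import Mathlib

/-!
By the Fenchel–Young inequality, `t * x - f t ≤ f*(x)` for every `t`, with equality exactly
when `x` is a subgradient of `f` at `t`. Since `Pr[a] * Pr[b] * K(a,b) = Pr[a,b]`, the difference
between `MI^f(X_A;X_B)` and the expected gain is the sum over `(a,b)` of the Fenchel–Young gaps at
`t = K(a,b)`, `x = R(h_A(a), h_B(b))`, weighted by `Pr[a] * Pr[b] > 0`. Hence it is nonnegative,
and it vanishes iff every gap does.
-/

noncomputable section

/-- The convex conjugate `f*(x) = sup_t (t·x − f(t))`, as a real-valued supremum. -/
def fconj (f : ℝ → ℝ) (x : ℝ) : ℝ := sSup (Set.range fun t => t * x - f t)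

/-- `c` is a subgradient of `f` at `t`: `f(s) ≥ f(t) + c·(s − t)` for all `s`. -/
def IsSubgradientAt (f : ℝ → ℝ) (t c : ℝ) : Prop := ∀ s : ℝ, f t + c * (s - t) ≤ f s

/-- `p` is a probability vector: nonnegative entries summing to `1`. -/
def IsProbVec {T : Type*} [Fintype T] (p : T → ℝ) : Prop := (∀ t, 0 ≤ p t) ∧ ∑ t, p t = 1

variable {SA SB S : Type*}

/-- Marginal probability `Pr[X_A = a]` of the joint pmf `μ`. -/
def mA [Fintype SB] (μ : SA → SB → ℝ) (a : SA) : ℝ := ∑ b, μ a b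

/-- Marginal probability `Pr[X_B = b]` of the joint pmf `μ`. -/
def mB [Fintype SA] (μ : SA → SB → ℝ) (b : SB) : ℝ := ∑ a, μ a b

/-- Pointwise mutual information `K(a,b) = Pr[a,b]/(Pr[a]·Pr[b])`. -/
def Kp [Fintype SA] [Fintype SB] (μ : SA → SB → ℝ) (a : SA) (b : SB) : ℝ :=
  μ a b / (mA μ a * mB μ b)

/-- The f-mutual information `MI^f(X_A;X_B) = Σ_{a,b} Pr[a]·Pr[b]·f(K(a,b))`. -/
def MIp [Fintype SA] [Fintype SB] (f : ℝ → ℝ) (μ : SA → SB → ℝ) : ℝ :=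
  ∑ a, ∑ b, mA μ a * mB μ b * f (Kp μ a b)

theorem mul_sub_le_fconj {f : ℝ → ℝ} {x : ℝ} (hx : BddAbove (Set.range fun t => t * x - f t))
    (t : ℝ) : t * x - f t ≤ fconj f x :=
  le_csSup hx ⟨t, rfl⟩

theorem fconj_le_iff_isSubgradientAt {f : ℝ → ℝ} {x : ℝ}
    (hx : BddAbove (Set.range fun t => t * x - f t)) (t : ℝ) :
    fconj f x ≤ t * x - f t ↔ IsSubgradientAt f t x := by
  rw [fconj, csSup_le_iff hx (Set.range_nonempty _), Set.forall_mem_range]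
  refine forall_congr' fun s => ?_
  constructor <;> intro h <;> linarith

theorem Fintype.sum_sum_eq_zero_iff_of_nonneg {α β M : Type*} [Fintype α] [Fintype β]
    [AddCommMonoid M] [PartialOrder M] [IsOrderedAddMonoid M] {g : α → β → M}
    (hg : ∀ a b, 0 ≤ g a b) : ∑ a, ∑ b, g a b = 0 ↔ ∀ a b, g a b = 0 := by
  rw [Finset.sum_eq_zero_iff_of_nonneg fun a _ => Finset.sum_nonneg fun b _ => hg a b]
  simp [Finset.sum_eq_zero_iff_of_nonneg, hg]

section

variable [Fintype SA] [Fintype SB] {μ : SA → SB → ℝ}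

theorem mA_mul_mB_mul_Kp (hmA : ∀ a, 0 < mA μ a) (hmB : ∀ b, 0 < mB μ b) (a : SA) (b : SB) :
    mA μ a * mB μ b * Kp μ a b = μ a b :=
  mul_div_cancel₀ _ (mul_pos (hmA a) (hmB b)).ne'

theorem MIp_sub_gain_eq_sum_fenchelYoung_gap (hmA : ∀ a, 0 < mA μ a) (hmB : ∀ b, 0 < mB μ b)
    (f : ℝ → ℝ) (x : SA → SB → ℝ) :
    MIp f μ - (∑ a, ∑ b, μ a b * x a b - ∑ a, ∑ b, mA μ a * mB μ b * fconj f (x a b)) =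
      ∑ a, ∑ b, mA μ a * mB μ b * (fconj f (x a b) - (Kp μ a b * x a b - f (Kp μ a b))) := by
  simp only [MIp, ← Finset.sum_sub_distrib]
  refine Finset.sum_congr rfl fun a _ => Finset.sum_congr rfl fun b _ => ?_
  linear_combination x a b * mA_mul_mB_mul_Kp hmA hmB a b

theorem gain_le_MIp_and_eq_iff (hmA : ∀ a, 0 < mA μ a) (hmB : ∀ b, 0 < mB μ b)
    (f : ℝ → ℝ) (x : SA → SB → ℝ) (hx : ∀ a b, BddAbove (Set.range fun t => t * x a b - f t)) :
    (∑ a, ∑ b, μ a b * x a b - ∑ a, ∑ b, mA μ a * mB μ b * fconj f (x a b) ≤ MIp f μ) ∧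
      (∑ a, ∑ b, μ a b * x a b - ∑ a, ∑ b, mA μ a * mB μ b * fconj f (x a b) = MIp f μ ↔
        ∀ a b, IsSubgradientAt f (Kp μ a b) (x a b)) := by
  have hweight a b : 0 < mA μ a * mB μ b := mul_pos (hmA a) (hmB b)
  have hgap a b : 0 ≤ fconj f (x a b) - (Kp μ a b * x a b - f (Kp μ a b)) :=
    sub_nonneg.2 (mul_sub_le_fconj (hx a b) _)
  have hgap_weighted a b := mul_nonneg (hweight a b).le (hgap a b)
  have hsum := MIp_sub_gain_eq_sum_fenchelYoung_gap hmA hmB f x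
  refine ⟨sub_nonneg.1 (hsum ▸ Finset.sum_nonneg fun a _ => Finset.sum_nonneg fun b _ =>
    hgap_weighted a b), ?_⟩
  rw [eq_comm, ← sub_eq_zero, hsum, Fintype.sum_sum_eq_zero_iff_of_nonneg hgap_weighted]
  refine forall₂_congr fun a b => ?_
  rw [mul_eq_zero, or_iff_right (hweight a b).ne', ← (hgap a b).ge_iff_eq', sub_nonpos,
    fconj_le_iff_isSubgradientAt (hx a b)]

end

theorem stmt_3_general [Fintype SA] [Fintype SB]
    (μ : SA → SB → ℝ)
    (hmA : ∀ a, 0 < mA μ a) (hmB : ∀ b, 0 < mB μ b)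
    (f : ℝ → ℝ)
    (hA : SA → S → ℝ) (hB : SB → S → ℝ)
    (R : (S → ℝ) → (S → ℝ) → ℝ)
    (hfin : ∀ a b, BddAbove (Set.range fun t => t * R (hA a) (hB b) - f t)) :
    (∑ a, ∑ b, μ a b * R (hA a) (hB b)
        - ∑ a, ∑ b, mA μ a * mB μ b * fconj f (R (hA a) (hB b))
      ≤ MIp f μ)
    ∧ ((∑ a, ∑ b, μ a b * R (hA a) (hB b)
        - ∑ a, ∑ b, mA μ a * mB μ b * fconj f (R (hA a) (hB b))
      = MIp f μ)
      ↔ ∀ a b, IsSubgradientAt f (Kp μ a b) (R (hA a) (hB b))) :=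
  gain_le_MIp_and_eq_iff hmA hmB f (fun a b => R (hA a) (hB b)) hfin

/-- Lemma 4.1: for any hypotheses `h_A : Σ_A → Δ_Σ`, `h_B : Σ_B → Δ_Σ` and any reward
function `R : Δ_Σ × Δ_Σ → ℝ` with `f*(R(h_A(a), h_B(b)))` finite everywhere, the
expected `f`-mutual information gain
`Σ Pr[a,b]·R(h_A(a),h_B(b)) − Σ Pr[a]·Pr[b]·f*(R(h_A(a),h_B(b)))` is at most
`MI^f(X_A;X_B)`, with equality iff `R(h_A(a),h_B(b))` is a subgradient of `f` at
`K(a,b)` for every `(a,b)`. -/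
theorem stmt_3 [Fintype SA] [Fintype SB] [Fintype S] [Nonempty SA] [Nonempty SB] [Nonempty S]
    (μ : SA → SB → ℝ) (hμ0 : ∀ a b, 0 ≤ μ a b) (hμ1 : ∑ a, ∑ b, μ a b = 1)
    (hmA : ∀ a, 0 < mA μ a) (hmB : ∀ b, 0 < mB μ b)
    (f : ℝ → ℝ) (hf : ConvexOn ℝ Set.univ f) (hf1 : f 1 = 0)
    (hA : SA → S → ℝ) (hB : SB → S → ℝ)
    (hhA : ∀ a, IsProbVec (hA a)) (hhB : ∀ b, IsProbVec (hB b))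
    (R : (S → ℝ) → (S → ℝ) → ℝ)
    (hfin : ∀ a b, BddAbove (Set.range fun t => t * R (hA a) (hB b) - f t)) :
    (∑ a, ∑ b, μ a b * R (hA a) (hB b)
        - ∑ a, ∑ b, mA μ a * mB μ b * fconj f (R (hA a) (hB b))
      ≤ MIp f μ)
    ∧ ((∑ a, ∑ b, μ a b * R (hA a) (hB b)
        - ∑ a, ∑ b, mA μ a * mB μ b * fconj f (R (hA a) (hB b))
      = MIp f μ)
      ↔ ∀ a b, IsSubgradientAt f (Kp μ a b) (R (hA a) (hB b))) :=
  stmt_3_general μ hmA hmB f hA hB R hfin
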